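/- For every C̃ > 0 and Ñ > 0 there exist δ > 0 and C_G > 0 with the following property. Let Ω ⊆ ℝ³ be open, let ε̃, ε : Ω → ℝ^{3×3} be differentiable matrix fields such that Ñ is a W^{1,∞}-bound for ε̃ on Ω and ε − ε̃ admits a W^{1,∞}-bound N₋ on Ω with N₋ < δ. Let u : Ω → ℝ³ be differentiable and assume the functions ‖u‖², |Du|², ‖curl u‖², ⟨ε̃u, u⟩, ⟨εu, u⟩, |div(ε̃u)|², |div(εu)|² are integrable on Ω. If the Gaffney inequality with permittivity ε̃ and constant C̃ holds for u, namely ∫_Ω (‖u‖² + |Du|²) dx ≤ C̃ ( ∫_Ω ⟨ε̃u, u⟩ dx + ∫_Ω ‖curl u‖² dx + ∫_Ω |div(ε̃u)|² dx ), then the Gaffney inequality with permittivity ε and constant C_G holds for u: ∫_Ω (‖u‖² + |Du|²) dx ≤ C_G ( ∫_Ω ⟨εu, u⟩ dx + ∫_Ω ‖curl u‖² dx + ∫_Ω |div(εu)|² dx ). -/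

import Mathlib

open MeasureTheory

/-- The Euclidean norm on ℝ³. -/
noncomputable def enorm3 (ξ : Fin 3 → ℝ) : ℝ := Real.sqrt (∑ i, ξ i ^ 2)

/-- The Euclidean inner product on ℝ³. -/
def edot (x y : Fin 3 → ℝ) : ℝ := ∑ i, x i * y i

/-- The partial derivative in the `i`-th coordinate direction of a function
`f : ℝ³ → ℝ` at `x`. -/
noncomputable def pd (f : (Fin 3 → ℝ) → ℝ) (i : Fin 3) (x : Fin 3 → ℝ) : ℝ :=
  fderiv ℝ f x (Pi.single i 1)

/-- The divergence of the matrix-vector product `εu` at `x`: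
`div(εu)(x) = ∑ i ∂ᵢ (εu)ᵢ(x)`. -/
noncomputable def divE (ε : (Fin 3 → ℝ) → Matrix (Fin 3) (Fin 3) ℝ)
    (u : (Fin 3 → ℝ) → (Fin 3 → ℝ)) (x : Fin 3 → ℝ) : ℝ :=
  ∑ i, pd (fun y => (ε y).mulVec (u y) i) i x

/-- `|Du(x)|² = ∑_{i,j} (∂ᵢ uⱼ(x))²`. -/
noncomputable def Du2 (u : (Fin 3 → ℝ) → (Fin 3 → ℝ)) (x : Fin 3 → ℝ) : ℝ :=
  ∑ i, ∑ j, pd (fun y => u y j) i x ^ 2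

/-- The curl of `u` at `x`:
`curl u = (∂₂u₃ − ∂₃u₂, ∂₃u₁ − ∂₁u₃, ∂₁u₂ − ∂₂u₁)`. -/
noncomputable def curlE (u : (Fin 3 → ℝ) → (Fin 3 → ℝ)) (x : Fin 3 → ℝ) : Fin 3 → ℝ :=
  ![pd (fun y => u y 2) 1 x - pd (fun y => u y 1) 2 x,
    pd (fun y => u y 0) 2 x - pd (fun y => u y 2) 0 x,
    pd (fun y => u y 1) 0 x - pd (fun y => u y 0) 1 x]

/-- `N` is a `W^{1,∞}`-bound for the matrix field `ε` on `Ω`: all entries and all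
their first partial derivatives are bounded by `N` on `Ω`. -/
def W1Bound (ε : (Fin 3 → ℝ) → Matrix (Fin 3) (Fin 3) ℝ) (Ω : Set (Fin 3 → ℝ)) (N : ℝ) : Prop :=
  ∀ x ∈ Ω, ∀ i j : Fin 3, |ε x i j| ≤ N ∧ ∀ k : Fin 3, |pd (fun y => ε y i j) k x| ≤ N

/- ## Auxiliary lemmas -/

lemma pd_sub' {f g : (Fin 3 → ℝ) → ℝ} {x : Fin 3 → ℝ} (hf : DifferentiableAt ℝ f x)
    (hg : DifferentiableAt ℝ g x) (i : Fin 3) :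
    pd (fun y => f y - g y) i x = pd f i x - pd g i x := by
  simp [pd, fderiv_fun_sub hf hg]

lemma pd_sum_mul' (a b : Fin 3 → (Fin 3 → ℝ) → ℝ) (x : Fin 3 → ℝ)
    (ha : ∀ j, DifferentiableAt ℝ (a j) x) (hb : ∀ j, DifferentiableAt ℝ (b j) x) (i : Fin 3) :
    pd (fun y => ∑ j, a j y * b j y) i x
      = ∑ j, (pd (a j) i x * b j x + a j x * pd (b j) i x) := by
  have H : HasFDerivAt (fun y => ∑ j : Fin 3, a j y * b j y)
      (∑ j : Fin 3, (a j x • fderiv ℝ (b j) x + b j x • fderiv ℝ (a j) x)) x :=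
    HasFDerivAt.fun_sum fun j _ => ((ha j).hasFDerivAt.mul (hb j).hasFDerivAt)
  rw [pd, H.fderiv]
  simp only [ContinuousLinearMap.sum_apply, ContinuousLinearMap.add_apply,
    ContinuousLinearMap.smul_apply, smul_eq_mul, pd]
  exact Finset.sum_congr rfl fun j _ => by ring

lemma divE_eq' (ε : (Fin 3 → ℝ) → Matrix (Fin 3) (Fin 3) ℝ)
    (u : (Fin 3 → ℝ) → (Fin 3 → ℝ)) (x : Fin 3 → ℝ)
    (hε : ∀ i j, DifferentiableAt ℝ (fun y => ε y i j) x)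
    (hu : ∀ j, DifferentiableAt ℝ (fun y => u y j) x) :
    divE ε u x
      = ∑ i, ∑ j, (pd (fun y => ε y i j) i x * u x j + ε x i j * pd (fun y => u y j) i x) := by
  unfold divE
  refine Finset.sum_congr rfl fun i _ => ?_
  have h : (fun y => (ε y).mulVec (u y) i) = fun y => ∑ j, ε y i j * u y j := by
    funext y; simp [Matrix.mulVec, dotProduct]
  rw [h, pd_sum_mul' (fun j y => ε y i j) (fun j y => u y j) x (fun j => hε i j) hu i]

lemma sq_sum3' (a b c : ℝ) : (a + b + c)^2 ≤ 3*(a^2 + b^2 + c^2) := by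
  nlinarith [sq_nonneg (a-b), sq_nonneg (a-c), sq_nonneg (b-c)]

lemma term_bound' {N g a v p : ℝ} (hg : |g| ≤ N) (ha : |a| ≤ N) :
    (g*v + a*p)^2 ≤ 2*N^2*(v^2 + p^2) := by
  have hg2 : g^2 ≤ N^2 := sq_le_sq' (neg_le_of_abs_le hg) (le_of_abs_le hg)
  have ha2 : a^2 ≤ N^2 := sq_le_sq' (neg_le_of_abs_le ha) (le_of_abs_le ha)
  nlinarith [sq_nonneg (g*p - a*v), sq_nonneg v, sq_nonneg p, sq_nonneg (g*v), sq_nonneg (a*p)]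

lemma sum_bound' (N : ℝ) (g a : Fin 3 → Fin 3 → ℝ) (v : Fin 3 → ℝ) (p : Fin 3 → Fin 3 → ℝ)
    (hg : ∀ i j, |g i j| ≤ N) (ha : ∀ i j, |a i j| ≤ N) :
    (∑ i, ∑ j, (g i j * v j + a i j * p i j))^2
      ≤ 54 * N^2 * ((∑ j, v j ^ 2) + ∑ i, ∑ j, p i j ^ 2) := by
  have hN2 : (0:ℝ) ≤ N^2 := sq_nonneg N
  have hrow : ∀ i, (∑ j, (g i j * v j + a i j * p i j))^2
      ≤ 6*N^2*((∑ j, v j ^ 2) + ∑ j, p i j ^ 2) := by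
    intro i
    have h1 := term_bound' (hg i 0) (ha i 0) (v := v 0) (p := p i 0)
    have h2 := term_bound' (hg i 1) (ha i 1) (v := v 1) (p := p i 1)
    have h3 := term_bound' (hg i 2) (ha i 2) (v := v 2) (p := p i 2)
    have h4 := sq_sum3' (g i 0 * v 0 + a i 0 * p i 0) (g i 1 * v 1 + a i 1 * p i 1)
      (g i 2 * v 2 + a i 2 * p i 2)
    simp only [Fin.sum_univ_three]
    linarith
  have H := sq_sum3' (∑ j, (g 0 j * v j + a 0 j * p 0 j)) (∑ j, (g 1 j * v j + a 1 j * p 1 j))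
    (∑ j, (g 2 j * v j + a 2 j * p 2 j))
  have h0 := hrow 0; have h1 := hrow 1; have h2 := hrow 2
  have hv : (0:ℝ) ≤ ∑ j, v j ^2 := Finset.sum_nonneg fun j _ => sq_nonneg _
  have hp : ∀ i, (0:ℝ) ≤ ∑ j, p i j ^2 := fun i => Finset.sum_nonneg fun j _ => sq_nonneg _
  have hp0 := hp 0; have hp1 := hp 1; have hp2 := hp 2
  rw [Fin.sum_univ_three, Fin.sum_univ_three (f := fun i => ∑ j, p i j ^ 2)]
  nlinarith [mul_nonneg hN2 hv, mul_nonneg hN2 (hp 0), mul_nonneg hN2 (hp 1), mul_nonneg hN2 (hp 2)]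

lemma bilin_bound' (N : ℝ) (m : Matrix (Fin 3) (Fin 3) ℝ) (v : Fin 3 → ℝ)
    (hm : ∀ i j, |m i j| ≤ N) :
    |∑ i, (∑ j, m i j * v j) * v i| ≤ 3 * N * ∑ i, v i ^ 2 := by
  have hb : ∀ i j, |m i j * v j * v i| ≤ N * (|v j| * |v i|) := by
    intro i j
    rw [abs_mul, abs_mul, ← mul_assoc]
    exact mul_le_mul_of_nonneg_right (mul_le_mul_of_nonneg_right (hm i j) (abs_nonneg _))
      (abs_nonneg _)
  have hN : 0 ≤ N := le_trans (abs_nonneg _) (hm 0 0)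
  have key : |∑ i, ∑ j, m i j * v j * v i| ≤ ∑ i, ∑ j, N * (|v j| * |v i|) :=
    le_trans (Finset.abs_sum_le_sum_abs _ _) (Finset.sum_le_sum fun i _ =>
      le_trans (Finset.abs_sum_le_sum_abs _ _) (Finset.sum_le_sum fun j _ => hb i j))
  have hre : ∑ i, (∑ j, m i j * v j) * v i = ∑ i, ∑ j, m i j * v j * v i :=
    Finset.sum_congr rfl fun i _ => by rw [Finset.sum_mul]
  rw [hre]
  refine le_trans key ?_
  simp only [Fin.sum_univ_three]
  nlinarith [sq_nonneg (|v 0| - |v 1|), sq_nonneg (|v 0| - |v 2|), sq_nonneg (|v 1| - |v 2|),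
    abs_nonneg (v 0), abs_nonneg (v 1), abs_nonneg (v 2), sq_abs (v 0), sq_abs (v 1), sq_abs (v 2)]

lemma sq_sub_le' (t a b : ℝ) (ht : 0 < t) : (a - b)^2 ≤ (1+t)*a^2 + (1+1/t)*b^2 := by
  have h2 : t * ((1+t)*a^2 + (1+1/t)*b^2 - (a-b)^2) = (t*a+b)^2 + t^2*a^2 - t^2*a^2 := by
    field_simp; ring
  nlinarith [sq_nonneg (t*a+b)]

lemma enorm3_sq (ξ : Fin 3 → ℝ) : enorm3 ξ ^ 2 = ∑ i, ξ i ^ 2 :=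
  Real.sq_sqrt (Finset.sum_nonneg fun i _ => sq_nonneg _)

lemma Du2_nonneg (u : (Fin 3 → ℝ) → (Fin 3 → ℝ)) (x : Fin 3 → ℝ) : 0 ≤ Du2 u x :=
  Finset.sum_nonneg fun i _ => Finset.sum_nonneg fun j _ => sq_nonneg _


lemma final_arith (Ct c t s δ Nm X IAt IA IB IDt ID : ℝ)
    (hC : 0 < Ct) (_hc : 0 < c) (ht : 0 < t) (hs : 0 < s)
    (htc : Ct * t * c = 1/4)
    (hδ1 : δ ≤ 1) (hδ2 : 24 * Ct * δ ≤ 1) (hδ3 : 432 * Ct * s * δ ≤ 1)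
    (hNm0 : 0 ≤ Nm) (hNmδ : Nm ≤ δ) (hX0 : 0 ≤ X)
    (hG : X ≤ Ct * (IAt + IB + IDt))
    (stepA : IAt ≤ IA + 3 * Nm * X)
    (stepDt : IDt ≤ (1 + t) * ID + s * (54 * Nm ^ 2) * X)
    (stepD : ID ≤ c * X) :
    X ≤ 2 * Ct * (IA + IB + ID) := by
  have hδ0 : 0 ≤ δ := le_trans hNm0 hNmδ
  have habs1 : Ct * (3 * Nm * X) ≤ (1/8) * X := by
    have h1 : 3 * Ct * Nm ≤ 1/8 := by
      have := mul_le_mul_of_nonneg_left hNmδ hC.le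
      linarith
    have := mul_le_mul_of_nonneg_right h1 hX0
    linarith
  have habs2 : Ct * (s * (54 * Nm ^ 2) * X) ≤ (1/8) * X := by
    have hNm2 : Nm ^ 2 ≤ δ := by nlinarith [hNm0, hNmδ, hδ1]
    have h1 : Ct * s * Nm ^ 2 ≤ Ct * s * δ :=
      mul_le_mul_of_nonneg_left hNm2 (mul_pos hC hs).le
    have h2 : Ct * s * (54 * Nm ^ 2) ≤ 1/8 := by linarith
    have := mul_le_mul_of_nonneg_right h2 hX0
    linarith
  have habs3 : Ct * (t * ID) ≤ (1/4) * X := by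
    have m1 : t * ID ≤ t * (c * X) := mul_le_mul_of_nonneg_left stepD ht.le
    have m2 : Ct * (t * ID) ≤ Ct * (t * (c * X)) := mul_le_mul_of_nonneg_left m1 hC.le
    have h2 : Ct * (t * (c * X)) = (1/4) * X := by
      rw [show Ct * (t * (c * X)) = (Ct * t * c) * X by ring, htc]
    linarith
  have hA' : Ct * IAt ≤ Ct * IA + Ct * (3 * Nm * X) := by
    have h := mul_le_mul_of_nonneg_left stepA hC.le
    linarith
  have hDt' : Ct * IDt ≤ Ct * ID + Ct * (t * ID) + Ct * (s * (54 * Nm ^ 2) * X) := by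
    have h := mul_le_mul_of_nonneg_left stepDt hC.le
    linarith
  have hG' : X ≤ Ct * IAt + Ct * IB + Ct * IDt := by linarith
  linarith

/-- Locally uniform Gaffney inequality: for every `Ct > 0` and `Nt > 0` there are
`δ > 0` and `C_G > 0`, depending only on `Ct` and `Nt`, such that whenever `εt` obeys
the Gaffney inequality with constant `Ct` for a vector field `u` and `ε − εt` has a
`W^{1,∞}`-bound `N₋ < δ`, then `ε` obeys the Gaffney inequality with constant `C_G`
for `u`. -/
theorem stmt11 (Ct Nt : ℝ) (hC : 0 < Ct) (hNt : 0 < Nt) :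
    ∃ δ : ℝ, 0 < δ ∧ ∃ CG : ℝ, 0 < CG ∧
      ∀ (Ω : Set (Fin 3 → ℝ)), IsOpen Ω →
      ∀ (εt ε : (Fin 3 → ℝ) → Matrix (Fin 3) (Fin 3) ℝ),
      (∀ x ∈ Ω, ∀ i j : Fin 3, DifferentiableAt ℝ (fun y => εt y i j) x) →
      (∀ x ∈ Ω, ∀ i j : Fin 3, DifferentiableAt ℝ (fun y => ε y i j) x) →
      W1Bound εt Ω Nt →
      (∃ Nm : ℝ, Nm < δ ∧ W1Bound (fun y => ε y - εt y) Ω Nm) →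
      ∀ (u : (Fin 3 → ℝ) → (Fin 3 → ℝ)),
      (∀ x ∈ Ω, ∀ j : Fin 3, DifferentiableAt ℝ (fun y => u y j) x) →
      IntegrableOn (fun x => enorm3 (u x) ^ 2) Ω →
      IntegrableOn (fun x => Du2 u x) Ω →
      IntegrableOn (fun x => enorm3 (curlE u x) ^ 2) Ω →
      IntegrableOn (fun x => edot ((εt x).mulVec (u x)) (u x)) Ω →
      IntegrableOn (fun x => edot ((ε x).mulVec (u x)) (u x)) Ω →
      IntegrableOn (fun x => divE εt u x ^ 2) Ω →
      IntegrableOn (fun x => divE ε u x ^ 2) Ω →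
      (∫ x in Ω, (enorm3 (u x) ^ 2 + Du2 u x)) ≤
        Ct * ((∫ x in Ω, edot ((εt x).mulVec (u x)) (u x)) +
          (∫ x in Ω, enorm3 (curlE u x) ^ 2) + ∫ x in Ω, divE εt u x ^ 2) →
      (∫ x in Ω, (enorm3 (u x) ^ 2 + Du2 u x)) ≤
        CG * ((∫ x in Ω, edot ((ε x).mulVec (u x)) (u x)) +
          (∫ x in Ω, enorm3 (curlE u x) ^ 2) + ∫ x in Ω, divE ε u x ^ 2) := by
  -- constants
  set c : ℝ := 216 * Nt ^ 2 with hc_def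
  have hc : 0 < c := by positivity
  set t : ℝ := 1 / (4 * Ct * c) with ht_def
  have ht : 0 < t := by positivity
  have ht1 : 0 < 1 + 1 / t := by positivity
  have htc : Ct * t * c = 1 / 4 := by
    rw [ht_def]; field_simp
  set δ : ℝ := min 1 (min Nt (min (1 / (24 * Ct)) (1 / (432 * Ct * (1 + 1 / t))))) with hδ_def
  have hδ : 0 < δ := by
    refine lt_min one_pos (lt_min hNt (lt_min (by positivity) (by positivity)))
  have hδ1 : δ ≤ 1 := min_le_left _ _
  have hδNt : δ ≤ Nt := le_trans (min_le_right _ _) (min_le_left _ _)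
  have hδ2 : δ ≤ 1 / (24 * Ct) := le_trans (min_le_right _ _)
    (le_trans (min_le_right _ _) (min_le_left _ _))
  have hδ3 : δ ≤ 1 / (432 * Ct * (1 + 1 / t)) := le_trans (min_le_right _ _)
    (le_trans (min_le_right _ _) (min_le_right _ _))
  have hδ2' : 24 * Ct * δ ≤ 1 := by
    have := (le_div_iff₀ (by positivity : (0:ℝ) < 24 * Ct)).mp hδ2
    linarith
  have hδ3' : 432 * Ct * (1 + 1 / t) * δ ≤ 1 := by
    have := (le_div_iff₀ (by positivity : (0:ℝ) < 432 * Ct * (1 + 1 / t))).mp hδ3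
    linarith
  clear_value c t δ
  clear ht_def hδ_def hδ2 hδ3
  refine ⟨δ, hδ, 2 * Ct, by positivity, ?_⟩
  intro Ω hΩ εt ε hdεt hdε hWεt hWm' u hdu h1 h2 hB hAt hA hDt hD hG
  obtain ⟨Nm₀, hNm₀, hWm₀⟩ := hWm'
  set Nm : ℝ := max Nm₀ 0 with hNm_def
  have hNm0 : 0 ≤ Nm := le_max_right _ _
  have hNmδ : Nm ≤ δ := max_le hNm₀.le hδ.le
  have hWm : W1Bound (fun y => ε y - εt y) Ω Nm := by
    intro x hx i j
    obtain ⟨hb1, hb2⟩ := hWm₀ x hx i j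
    exact ⟨hb1.trans (le_max_left _ _), fun k => (hb2 k).trans (le_max_left _ _)⟩
  have hΩm : MeasurableSet Ω := hΩ.measurableSet
  -- differentiability of the difference entries
  have hdm : ∀ x ∈ Ω, ∀ i j : Fin 3,
      DifferentiableAt ℝ (fun y => (ε y - εt y) i j) x := by
    intro x hx i j
    have := (hdε x hx i j).fun_sub (hdεt x hx i j)
    simpa [Matrix.sub_apply] using this
  -- abbreviations for the integrals
  set X : ℝ := ∫ x in Ω, (enorm3 (u x) ^ 2 + Du2 u x) with hX_def
  set IAt : ℝ := ∫ x in Ω, edot ((εt x).mulVec (u x)) (u x) with hIAt_def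
  set IA : ℝ := ∫ x in Ω, edot ((ε x).mulVec (u x)) (u x) with hIA_def
  set IB : ℝ := ∫ x in Ω, enorm3 (curlE u x) ^ 2 with hIB_def
  set IDt : ℝ := ∫ x in Ω, divE εt u x ^ 2 with hIDt_def
  set ID : ℝ := ∫ x in Ω, divE ε u x ^ 2 with hID_def
  have hS_int : IntegrableOn (fun x => enorm3 (u x) ^ 2 + Du2 u x) Ω := h1.add h2
  have hSx : ∀ x, 0 ≤ enorm3 (u x) ^ 2 + Du2 u x :=
    fun x => add_nonneg (sq_nonneg _) (Du2_nonneg u x)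
  have hX0 : 0 ≤ X := setIntegral_nonneg hΩm fun x _ => hSx x
  -- pointwise facts
  have hptA : ∀ x ∈ Ω, edot ((εt x).mulVec (u x)) (u x)
      ≤ edot ((ε x).mulVec (u x)) (u x) + 3 * Nm * (enorm3 (u x) ^ 2 + Du2 u x) := by
    intro x hx
    have hsplit : edot ((ε x).mulVec (u x)) (u x) - edot ((εt x).mulVec (u x)) (u x)
        = edot ((ε x - εt x).mulVec (u x)) (u x) := by
      simp [edot, Matrix.sub_mulVec, Matrix.mulVec, dotProduct, sub_mul,
        Finset.sum_sub_distrib]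
    have hbl := bilin_bound' Nm (ε x - εt x) (u x) (fun i j => (hWm x hx i j).1)
    have hbl' : |edot ((ε x - εt x).mulVec (u x)) (u x)| ≤ 3 * Nm * ∑ i, u x i ^ 2 := by
      simpa [edot, Matrix.mulVec, dotProduct] using hbl
    have h3 : enorm3 (u x) ^ 2 = ∑ i, u x i ^ 2 := enorm3_sq _
    have habs := abs_le.mp hbl'
    have hDu := Du2_nonneg u x
    nlinarith [habs.1, habs.2, mul_nonneg (mul_nonneg (by norm_num : (0:ℝ) ≤ 3) hNm0) hDu]
  -- divergence decompositions at points of Ω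
  have hdivm : ∀ x ∈ Ω, divE (fun y => ε y - εt y) u x = divE ε u x - divE εt u x := by
    intro x hx
    rw [divE_eq' ε u x (hdε x hx) (hdu x hx), divE_eq' εt u x (hdεt x hx) (hdu x hx),
      divE_eq' (fun y => ε y - εt y) u x (hdm x hx) (hdu x hx)]
    rw [← Finset.sum_sub_distrib]
    refine Finset.sum_congr rfl fun i _ => ?_
    rw [← Finset.sum_sub_distrib]
    refine Finset.sum_congr rfl fun j _ => ?_
    have hpd : pd (fun y => (ε y - εt y) i j) i x
        = pd (fun y => ε y i j) i x - pd (fun y => εt y i j) i x := by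
      have h := pd_sub' (hdε x hx i j) (hdεt x hx i j) i
      have he : (fun y => (ε y - εt y) i j) = fun y => ε y i j - εt y i j := by
        funext y; simp [Matrix.sub_apply]
      rw [he, h]
    rw [hpd]
    simp only [Matrix.sub_apply]
    ring
  have hdivm_sq : ∀ x ∈ Ω,
      divE (fun y => ε y - εt y) u x ^ 2 ≤ 54 * Nm ^ 2 * (enorm3 (u x) ^ 2 + Du2 u x) := by
    intro x hx
    rw [divE_eq' (fun y => ε y - εt y) u x (hdm x hx) (hdu x hx), enorm3_sq]
    exact sum_bound' Nm _ _ (u x) _ (fun i j => (hWm x hx i j).2 i) (fun i j => (hWm x hx i j).1)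
  have hdivε_sq : ∀ x ∈ Ω,
      divE ε u x ^ 2 ≤ c * (enorm3 (u x) ^ 2 + Du2 u x) := by
    intro x hx
    rw [divE_eq' ε u x (hdε x hx) (hdu x hx), enorm3_sq]
    have hbound : ∀ i j : Fin 3, |ε x i j| ≤ 2 * Nt ∧
        ∀ k : Fin 3, |pd (fun y => ε y i j) k x| ≤ 2 * Nt := by
      intro i j
      obtain ⟨ht1', ht2'⟩ := hWεt x hx i j
      obtain ⟨hm1, hm2⟩ := hWm x hx i j
      constructor
      · have : ε x i j = εt x i j + (ε x - εt x) i j := by simp [Matrix.sub_apply]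
        rw [this]
        calc |εt x i j + (ε x - εt x) i j| ≤ |εt x i j| + |(ε x - εt x) i j| := abs_add_le _ _
          _ ≤ Nt + Nm := add_le_add ht1' hm1
          _ ≤ 2 * Nt := by linarith [hNmδ, hδNt]
      · intro k
        have hpd : pd (fun y => ε y i j) k x
            = pd (fun y => εt y i j) k x + pd (fun y => (ε y - εt y) i j) k x := by
          have h := pd_sub' (hdε x hx i j) (hdεt x hx i j) k
          have he : (fun y => (ε y - εt y) i j) = fun y => ε y i j - εt y i j := by
            funext y; simp [Matrix.sub_apply]
          rw [he, h]; ring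
        rw [hpd]
        calc |pd (fun y => εt y i j) k x + pd (fun y => (ε y - εt y) i j) k x|
            ≤ |pd (fun y => εt y i j) k x| + |pd (fun y => (ε y - εt y) i j) k x| := abs_add_le _ _
          _ ≤ Nt + Nm := add_le_add (ht2' k) (hm2 k)
          _ ≤ 2 * Nt := by linarith [hNmδ, hδNt]
    have := sum_bound' (2 * Nt) (fun i j => pd (fun y => ε y i j) i x)
      (fun i j => ε x i j) (u x) (fun i j => pd (fun y => u y j) i x)
      (fun i j => (hbound i j).2 i) (fun i j => (hbound i j).1)
    calc (∑ i, ∑ j, (pd (fun y => ε y i j) i x * u x j + ε x i j * pd (fun y => u y j) i x))^2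
        ≤ 54 * (2*Nt)^2 * ((∑ j, u x j ^ 2) + ∑ i, ∑ j, pd (fun y => u y j) i x ^ 2) := this
      _ = c * ((∑ j, u x j ^ 2) + Du2 u x) := by rw [hc_def, Du2]; ring
  have hptDt : ∀ x ∈ Ω, divE εt u x ^ 2
      ≤ (1 + t) * divE ε u x ^ 2
        + ((1 + 1/t) * (54 * Nm ^ 2)) * (enorm3 (u x) ^ 2 + Du2 u x) := by
    intro x hx
    have h1' : divE εt u x = divE ε u x - divE (fun y => ε y - εt y) u x := by
      have := hdivm x hx; linarith
    rw [h1']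
    have h2' := sq_sub_le' t (divE ε u x) (divE (fun y => ε y - εt y) u x) ht
    have h3' := hdivm_sq x hx
    have h4' := mul_le_mul_of_nonneg_left h3' ht1.le
    linarith only [h2', h4']
  -- integral inequalities
  have stepA : IAt ≤ IA + 3 * Nm * X := by
    have hint : IntegrableOn (fun x => edot ((ε x).mulVec (u x)) (u x)
        + 3 * Nm * (enorm3 (u x) ^ 2 + Du2 u x)) Ω := hA.add (hS_int.const_mul _)
    have := setIntegral_mono_on hAt hint hΩm hptA
    rwa [integral_add hA (hS_int.const_mul _), integral_const_mul] at this
  have stepDt : IDt ≤ (1 + t) * ID + ((1 + 1/t) * (54 * Nm ^ 2)) * X := by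
    have hint : IntegrableOn (fun x => (1 + t) * divE ε u x ^ 2
        + ((1 + 1/t) * (54 * Nm ^ 2)) * (enorm3 (u x) ^ 2 + Du2 u x)) Ω :=
      (hD.const_mul _).add (hS_int.const_mul _)
    have := setIntegral_mono_on hDt hint hΩm hptDt
    rwa [integral_add (hD.const_mul _) (hS_int.const_mul _), integral_const_mul,
      integral_const_mul] at this
  have stepD : ID ≤ c * X := by
    have := setIntegral_mono_on hD (hS_int.const_mul c) hΩm hdivε_sq
    rwa [integral_const_mul] at this
  exact final_arith Ct c t (1 + 1 / t) δ Nm X IAt IA IB IDt ID hC hc ht ht1 htc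
    hδ1 hδ2' hδ3' hNm0 hNmδ hX0 hG stepA stepDt stepD
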